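/- Let R be an F-pure Noetherian ring of characteristic p, I₁,…,I_t ideals, and J ⊆ R an ideal with I₁,…,I_t ⊆ √J. Then the set B^J(I₁,…,I_t) = ⋃_e ⋃_{a ∈ V(p^e)} [0,a₁/p^e] × ⋯ × [0,a_t/p^e] ⊆ ℝ^t is Lebesgue measurable and its measure equals the F-volume: Vol(B^J(I₁,…,I_t)) = Vol_F^J(I₁,…,I_t). -/

import Mathlib

open Ideal Filter MeasureTheory

/-- The `q`-th Frobenius power of an ideal: the ideal generated by `q`-th powers of its
elements (used with `q = p ^ e`). -/
def Ideal.frobPow {R : Type*} [CommRing R] (J : Ideal R) (q : ℕ) : Ideal R :=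
  Ideal.span ((fun a => a ^ q) '' (J : Set R))

/-- The set `V` of exponent vectors `a ∈ ℕ^t` with `I₁^{a₁} ⋯ I_t^{a_t} ⊄ J'`. -/
def Vnu {R : Type*} [CommRing R] {t : ℕ} (I : Fin t → Ideal R) (J' : Ideal R) :
    Set (Fin t → ℕ) :=
  {a | ¬ (∏ i, I i ^ a i) ≤ J'}

universe u v

/-- A ring homomorphism `f : R → S` is pure if for every `R`-module `M`, the natural map
`M → M ⊗_R S` (with `S` viewed as an `R`-module via `f`) is injective. -/
def RingHom.IsPureHom {R : Type u} {S : Type v} [CommRing R] [CommRing S]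
    (f : R →+* S) : Prop :=
  ∀ (M : Type (max u v)) [AddCommGroup M] [Module R M],
    letI : Module R S := Module.compHom S f
    Function.Injective (fun m : M => (TensorProduct.tmul R m (1 : S) : TensorProduct R M S))

/-- `R` is F-pure if the Frobenius endomorphism is a pure ring homomorphism. -/
def IsFPure (p : ℕ) (R : Type u) [CommRing R] [Fact p.Prime] [CharP R p] : Prop :=
  RingHom.IsPureHom (frobenius R p)

/-- The region `B^{J'}(I; q) = ⋃_{a ∈ V} ∏ᵢ [0, aᵢ/q] ⊆ ℝ^t`. -/
def Breg {R : Type*} [CommRing R] {t : ℕ} (I : Fin t → Ideal R) (J' : Ideal R) (q : ℕ) :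
    Set (Fin t → ℝ) :=
  ⋃ a ∈ Vnu I J', Set.univ.pi fun i => Set.Icc (0 : ℝ) ((a i : ℝ) / (q : ℝ))


/-!
F-purity lets `x ↦ x ^ p` detect membership in an ideal `K` through `K^[p]`, so `a ∈ V(p^e)`
forces `p • a ∈ V(p^(e+1))`: the regions `B(p^e)` increase and `vol B = lim vol B(p^e)`.
Since `Iᵢ ⊆ √J` and `J` is finitely generated, `V(q) ⊆ [0, Cq)^t`. Up to coordinate
hyperplanes, `B(q)` is tiled by the cubes of side `1/q` with top corner `a/q`, `a ∈ V(q)`,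
`a ≥ 1`, so `vol B(q) = #{a ∈ V(q) | a ≥ 1} / q^t`; this differs from `#V(q) / q^t` by at most
`t C^(t-1) / q`, which tends to `0`.
-/

theorem RingHom.IsPureHom.comap_map_eq {R : Type u} {S : Type v} [CommRing R] [CommRing S]
    {f : R →+* S} (hf : f.IsPureHom) (K : Ideal R) : (K.map f).comap f = K := by
  refine le_antisymm (fun x hx => ?_) Ideal.le_comap_map
  let _ : Module R S := Module.compHom S f
  -- Purity is tested on `M = R ⧸ K`, where `x̄ ⊗ 1 = 1 ⊗ f x` vanishes because `f x ∈ K S`.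
  let M := ULift.{v} (R ⧸ K)
  have hsmul : ∀ r : R, r • (ULift.up 1 : M) = ULift.up (Ideal.Quotient.mk K r) := fun r =>
    congrArg ULift.up (Algebra.smul_def r (1 : R ⧸ K) ▸ mul_one _)
  let φ : S →ₗ[R] TensorProduct R M S := TensorProduct.mk R M S (ULift.up 1)
  have φ_map : ∀ (r : R) (s : S), φ (f r * s) = ULift.up (Ideal.Quotient.mk K r) ⊗ₜ s :=
    fun r s => by rw [← hsmul, TensorProduct.smul_tmul]; rfl
  have hφ : ∀ y ∈ K.map f, ∀ s : S, φ (y * s) = 0 := by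
    intro y hy
    induction hy using Submodule.span_induction with
    | mem _ hk =>
      obtain ⟨k, hk, rfl⟩ := hk
      intro s
      rw [φ_map, Ideal.Quotient.eq_zero_iff_mem.mpr hk]
      exact TensorProduct.zero_tmul _ _
    | zero => simp
    | add y z _ _ hy hz => intro s; rw [add_mul, map_add, hy, hz, add_zero]
    | smul c y _ hy => intro s; rw [smul_eq_mul, mul_comm c, mul_assoc]; exact hy _
  have h := hφ _ hx 1
  rw [φ_map, ← TensorProduct.zero_tmul M (1 : S)] at h
  exact Ideal.Quotient.eq_zero_iff_mem.mp (congrArg ULift.down (hf M h))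

namespace Ideal

variable {R : Type*} [CommRing R]

theorem pow_mem_frobPow {J : Ideal R} {x : R} (hx : x ∈ J) (q : ℕ) : x ^ q ∈ J.frobPow q :=
  subset_span ⟨x, hx, rfl⟩

theorem frobPow_mul_le (J : Ideal R) (q r : ℕ) : J.frobPow (q * r) ≤ (J.frobPow q).frobPow r :=
  span_le.mpr <| by
    rintro _ ⟨x, hx, rfl⟩
    simpa only [pow_mul, SetLike.mem_coe] using pow_mem_frobPow (pow_mem_frobPow hx q) r

theorem span_pow_card_mul_add_one_le (T : Finset R) (q : ℕ) :
    span (T : Set R) ^ (T.card * q + 1) ≤ span ((fun x => x ^ q) '' T) := by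
  classical
  induction T using Finset.induction_on with
  | empty => simp
  | insert a T ha ih =>
    rw [Finset.card_insert_of_notMem ha, Finset.coe_insert, Set.insert_eq, span_union,
      show (T.card + 1) * q + 1 = q + (T.card * q + 1) by ring]
    refine sup_pow_add_le_pow_sup_pow.trans (sup_le ?_ (ih.trans (span_mono ?_)))
    · rw [span_singleton_pow, span_le, Set.singleton_subset_iff]
      exact subset_span ⟨a, by simp, rfl⟩
    · exact Set.image_mono (by simp)

theorem pow_card_mul_add_one_le_frobPow {J : Ideal R} {T : Finset R} (hT : span (T : Set R) = J)
    (q : ℕ) : J ^ (T.card * q + 1) ≤ J.frobPow q :=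
  hT ▸ (span_pow_card_mul_add_one_le T q).trans (span_mono (Set.image_mono subset_span))

end Ideal

theorem IsFPure.mem_of_pow_mem_frobPow {p : ℕ} {R : Type u} [CommRing R] [Fact p.Prime]
    [CharP R p] (hFP : IsFPure p R) {K : Ideal R} {x : R} (hx : x ^ p ∈ K.frobPow p) : x ∈ K :=
  (hFP.comap_map_eq K).le hx

section Vnu

variable {R : Type*} [CommRing R] {t : ℕ}

theorem isLowerSet_Vnu (I : Fin t → Ideal R) (J' : Ideal R) : IsLowerSet (Vnu I J') :=
  fun _ _ hba ha hle =>
    ha ((Finset.prod_le_prod' fun i _ => Ideal.pow_le_pow_right (hba i)).trans hle)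

theorem lt_of_mem_Vnu {I : Fin t → Ideal R} {J' : Ideal R} {M : ℕ} {i : Fin t}
    (hM : I i ^ M ≤ J') {a : Fin t → ℕ} (ha : a ∈ Vnu I J') : a i < M := by
  by_contra! hle
  exact ha ((Ideal.prod_le_inf.trans (Finset.inf_le (Finset.mem_univ i))).trans
    ((Ideal.pow_le_pow_right hle).trans hM))

theorem exists_lt_of_mem_Vnu_frobPow [IsNoetherianRing R] {I : Fin t → Ideal R} {J : Ideal R}
    (hrad : ∀ i, I i ≤ J.radical) :
    ∃ C : ℕ, ∀ q, 0 < q → ∀ a ∈ Vnu I (J.frobPow q), ∀ i, a i < C * q := by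
  obtain ⟨n, hn⟩ := J.exists_radical_pow_le_of_fg (IsNoetherian.noetherian _)
  obtain ⟨T, hT⟩ := IsNoetherian.noetherian J
  refine ⟨n * (T.card + 1), fun q hq a ha i => ?_⟩
  have hpow : I i ^ (n * (T.card * q + 1)) ≤ J.frobPow q := by
    rw [pow_mul]
    exact (Ideal.pow_right_mono ((Ideal.pow_right_mono (hrad i) n).trans hn) _).trans
      (Ideal.pow_card_mul_add_one_le_frobPow hT q)
  have : n * (T.card * q + 1) ≤ n * (T.card + 1) * q := by
    rw [mul_assoc]; exact Nat.mul_le_mul_left n (by nlinarith)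
  exact (lt_of_mem_Vnu hpow ha).trans_le this

theorem IsFPure.nsmul_mem_Vnu_frobPow {p : ℕ} [Fact p.Prime] [CharP R p] (hFP : IsFPure p R)
    {I : Fin t → Ideal R} {J : Ideal R} {q : ℕ} {a : Fin t → ℕ}
    (ha : a ∈ Vnu I (J.frobPow q)) : p • a ∈ Vnu I (J.frobPow (q * p)) := by
  intro hle
  refine ha fun x hx => hFP.mem_of_pow_mem_frobPow (J.frobPow_mul_le q p (hle ?_))
  simpa only [Pi.smul_apply, smul_eq_mul, mul_comm p, pow_mul, Finset.prod_pow] using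
    Ideal.pow_mem_pow hx p

theorem IsFPure.monotone_Breg {p : ℕ} [Fact p.Prime] [CharP R p] (hFP : IsFPure p R)
    (I : Fin t → Ideal R) (J : Ideal R) : Monotone fun e => Breg I (J.frobPow (p ^ e)) (p ^ e) := by
  have hp : (p : ℝ) ≠ 0 := Nat.cast_ne_zero.mpr (Fact.out : p.Prime).ne_zero
  refine monotone_nat_of_le_succ fun e => Set.iUnion₂_subset fun a ha => ?_
  have hpa : p • a ∈ Vnu I (J.frobPow (p ^ (e + 1))) := pow_succ p e ▸ hFP.nsmul_mem_Vnu_frobPow ha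
  have hbox : ∀ i, ((a i : ℕ) : ℝ) / ((p ^ e : ℕ) : ℝ)
      = (((p • a) i : ℕ) : ℝ) / ((p ^ (e + 1) : ℕ) : ℝ) := fun i => by
    simp only [Pi.smul_apply, smul_eq_mul, Nat.cast_mul, Nat.cast_pow, pow_succ]
    field_simp
  simp only [hbox]
  exact Set.subset_biUnion_of_mem (u := fun b : Fin t → ℕ =>
    Set.univ.pi fun i => Set.Icc (0 : ℝ) ((b i : ℝ) / ((p ^ (e + 1) : ℕ) : ℝ))) hpa

end Vnu

section GridCell

variable {t q : ℕ}

def gridCell (q : ℕ) (a : Fin t → ℕ) : Set (Fin t → ℝ) :=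
  Set.univ.pi fun i => Set.Ioc (((a i : ℝ) - 1) / q) ((a i : ℝ) / q)

theorem mem_gridCell_iff (hq : 0 < q) {a : Fin t → ℕ} {x : Fin t → ℝ} :
    x ∈ gridCell q a ↔ ∀ i, ⌈q * x i⌉ = a i := by
  have hq' : (0 : ℝ) < q := Nat.cast_pos.mpr hq
  simp only [gridCell, Set.mem_pi, Set.mem_univ, true_implies, Set.mem_Ioc, Int.ceil_eq_iff,
    Int.cast_natCast, div_lt_iff₀' hq', le_div_iff₀' hq']

theorem pairwise_disjoint_gridCell (hq : 0 < q) : Pairwise fun a b : Fin t → ℕ => Disjoint (gridCell q a) (gridCell q b) :=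
  fun a b hab => Set.disjoint_left.mpr fun x hxa hxb => hab <| funext fun i => by
    have := ((mem_gridCell_iff hq).mp hxa i).symm.trans ((mem_gridCell_iff hq).mp hxb i)
    exact_mod_cast this

theorem volume_gridCell (hq : 0 < q) (a : Fin t → ℕ) :
    volume (gridCell q a) = ENNReal.ofReal ((q : ℝ) ^ t)⁻¹ := by
  have hq' : (0 : ℝ) < q := Nat.cast_pos.mpr hq
  simp only [gridCell, Real.volume_pi_Ioc, ← sub_div, sub_sub_cancel, Finset.prod_const,
    Finset.card_univ, Fintype.card_fin, one_div]
  rw [← ENNReal.ofReal_pow (by positivity), inv_pow]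

theorem gridCell_subset_pi_Icc {a : Fin t → ℕ} (ha : 1 ≤ a) :
    gridCell q a ⊆ Set.univ.pi fun i => Set.Icc (0 : ℝ) ((a i : ℝ) / q) :=
  Set.pi_mono fun i _ x hx => ⟨le_trans (div_nonneg (sub_nonneg.mpr (by exact_mod_cast ha i))
    q.cast_nonneg) hx.1.le, hx.2⟩

theorem mem_gridCell_ceil (hq : 0 < q) {x : Fin t → ℝ} (hx : ∀ i, 0 ≤ x i) :
    x ∈ gridCell q fun i => ⌈q * x i⌉₊ :=
  (mem_gridCell_iff hq).mpr fun i =>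
    (Int.natCast_ceil_eq_ceil (mul_nonneg q.cast_nonneg (hx i))).symm

end GridCell

theorem volume_biUnion_pi_Icc {t q : ℕ} {V : Set (Fin t → ℕ)} (hfin : V.Finite)
    (hlow : IsLowerSet V) (hq : 0 < q) :
    volume (⋃ a ∈ V, Set.univ.pi fun i => Set.Icc (0 : ℝ) ((a i : ℝ) / q)) =
      ENNReal.ofReal ((V ∩ Set.Ici 1).ncard / (q : ℝ) ^ t) := by
  set W := V ∩ Set.Ici 1
  have hW : W.Finite := hfin.subset Set.inter_subset_left
  have hcells : volume (⋃ a ∈ hW.toFinset, gridCell q a) = ENNReal.ofReal (W.ncard / q ^ t) := by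
    rw [measure_biUnion_finset ((pairwise_disjoint_gridCell hq).set_pairwise _)
      fun _ _ => MeasurableSet.univ_pi fun _ => measurableSet_Ioc]
    simp only [volume_gridCell hq, Finset.sum_const, nsmul_eq_mul, ← Set.ncard_eq_toFinset_card W hW]
    rw [div_eq_mul_inv, ENNReal.ofReal_mul (Nat.cast_nonneg _), ENNReal.ofReal_natCast]
  refine le_antisymm ?_ ?_
  · have hnull : volume (⋃ i, {x : Fin t → ℝ | x i = 0}) = 0 :=
      measure_iUnion_null fun i => Measure.pi_hyperplane _ i 0
    calc _ ≤ volume ((⋃ a ∈ hW.toFinset, gridCell q a) ∪ ⋃ i, {x : Fin t → ℝ | x i = 0}) :=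
          measure_mono ?_
      _ ≤ volume (⋃ a ∈ hW.toFinset, gridCell q a) + volume (⋃ i, {x : Fin t → ℝ | x i = 0}) :=
          measure_union_le _ _
      _ = _ := by rw [hnull, add_zero, hcells]
    intro x hx
    obtain ⟨a, ha, hxa⟩ := Set.mem_iUnion₂.mp hx
    by_cases! h0 : ∃ i, x i = 0
    · exact Or.inr (Set.mem_iUnion.mpr h0)
    have hxpos i : 0 < x i := (hxa i trivial).1.lt_of_ne' (h0 i)
    refine Or.inl (Set.mem_iUnion₂.mpr ⟨_, hW.mem_toFinset.mpr ⟨hlow ?_ ha, ?_⟩,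
      mem_gridCell_ceil hq fun i => (hxpos i).le⟩)
    · exact fun i => Nat.ceil_le.mpr ((le_div_iff₀' (Nat.cast_pos.mpr hq)).mp (hxa i trivial).2)
    · exact fun i => Nat.one_le_ceil_iff.mpr (mul_pos (Nat.cast_pos.mpr hq) (hxpos i))
  · rw [← hcells]
    refine measure_mono (Set.iUnion₂_subset fun a ha => ?_)
    rw [Set.Finite.mem_toFinset] at ha
    exact Set.subset_iUnion₂_of_subset a ha.1 (gridCell_subset_pi_Icc ha.2)

theorem ncard_diff_Ici_one_le {t M : ℕ} {V : Set (Fin t → ℕ)} (hV : ∀ a ∈ V, ∀ i, a i < M) :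
    (V \ Set.Ici 1).ncard ≤ t * M ^ (t - 1) := by
  classical
  let S : Fin t → Finset (Fin t → ℕ) := fun i =>
    Fintype.piFinset (Function.update (fun _ => Finset.range M) i {0})
  have hsub : V \ Set.Ici 1 ⊆ ↑(Finset.univ.biUnion S) := by
    rintro a ⟨ha, h1⟩
    obtain ⟨i, hi⟩ : ∃ i, a i = 0 := by
      simpa [Pi.le_def, Nat.one_le_iff_ne_zero] using h1
    simp only [Finset.coe_biUnion, Finset.coe_univ, Set.mem_univ, Set.iUnion_true,
      Set.mem_iUnion, Finset.mem_coe, Fintype.mem_piFinset, S]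
    refine ⟨i, fun j => ?_⟩
    rcases eq_or_ne j i with rfl | hj
    · simp [hi]
    · simpa [hj] using hV a ha j
  have hcard : ∀ i, (S i).card = M ^ (t - 1) := fun i => by
    rw [Fintype.card_piFinset, ← Finset.mul_prod_erase _ _ (Finset.mem_univ i),
      Finset.prod_congr rfl fun j hj => by rw [Function.update_of_ne (Finset.ne_of_mem_erase hj)]]
    simp
  calc (V \ Set.Ici 1).ncard ≤ (Finset.univ.biUnion S).card :=
        (Set.ncard_le_ncard hsub (Finset.finite_toSet _)).trans (Set.ncard_coe_finset _).le
    _ ≤ ∑ i, (S i).card := Finset.card_biUnion_le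
    _ = t * M ^ (t - 1) := by simp [hcard]

theorem tendsto_natCast_div_pow_of_le_of_le_add {p t C : ℕ} (hp : 1 < p) {u v : ℕ → ℕ} {L : ℝ}
    (hvu : ∀ e, v e ≤ u e) (huv : ∀ e, u e ≤ v e + t * (C * p ^ e) ^ (t - 1))
    (hu : Tendsto (fun e => (u e : ℝ) / (p : ℝ) ^ (e * t)) atTop (nhds L)) :
    Tendsto (fun e => (v e : ℝ) / (p : ℝ) ^ (e * t)) atTop (nhds L) := by
  have hp' : (0 : ℝ) < p := by positivity
  have herr : Tendsto (fun e : ℕ => (t * C ^ (t - 1) : ℝ) / (p : ℝ) ^ e) atTop (nhds 0) :=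
    tendsto_const_nhds.div_atTop (tendsto_pow_atTop_atTop_of_one_lt (by exact_mod_cast hp))
  have hscale : ∀ e : ℕ, (t * (C * p ^ e) ^ (t - 1) : ℝ) / (p : ℝ) ^ (e * t)
      = (t * C ^ (t - 1) : ℝ) / (p : ℝ) ^ e := fun e => by
    rcases t with _ | s
    · simp
    · rw [Nat.add_sub_cancel, mul_pow, ← pow_mul, mul_add_one, pow_add]
      field_simp
  have hlower : ∀ e, (u e : ℝ) / (p : ℝ) ^ (e * t) - (t * C ^ (t - 1) : ℝ) / (p : ℝ) ^ e
      ≤ (v e : ℝ) / (p : ℝ) ^ (e * t) := fun e => by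
    rw [← hscale, ← sub_div]
    gcongr
    rw [sub_le_iff_le_add]
    exact_mod_cast huv e
  refine tendsto_of_tendsto_of_tendsto_of_le_of_le (by simpa using hu.sub herr) hu hlower
    fun e => ?_
  gcongr
  exact hvu e

/-- For `R` F-pure, `B^J(I) = ⋃_e B^J(I; p^e)` is Lebesgue measurable and its volume equals
the F-volume `Vol_F^J(I)`. -/
theorem stmt11 {R : Type u} [CommRing R] [IsNoetherianRing R] (p : ℕ) [Fact p.Prime]
    [CharP R p] (hFP : IsFPure p R) {t : ℕ} (I : Fin t → Ideal R) (J : Ideal R)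
    (hrad : ∀ i, I i ≤ J.radical) (L : ℝ)
    (hL : Tendsto (fun e : ℕ => ((Vnu I (J.frobPow (p ^ e))).ncard : ℝ) / (p : ℝ) ^ (e * t))
      atTop (nhds L)) :
    MeasurableSet (⋃ e : ℕ, Breg I (J.frobPow (p ^ e)) (p ^ e)) ∧
    MeasureTheory.volume (⋃ e : ℕ, Breg I (J.frobPow (p ^ e)) (p ^ e)) =
      ENNReal.ofReal L := by
  have hp : p.Prime := Fact.out
  let V e := Vnu I (J.frobPow (p ^ e))
  obtain ⟨C, hC⟩ := exists_lt_of_mem_Vnu_frobPow hrad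
  have hbound e : ∀ a ∈ V e, ∀ i, a i < C * p ^ e := hC _ (pow_pos hp.pos e)
  have hfin e : (V e).Finite := (Set.Finite.pi fun _ => Set.finite_Iio (C * p ^ e)).subset
    fun a ha => Set.mem_univ_pi.mpr (hbound e a ha)
  have hvol e : volume (Breg I (J.frobPow (p ^ e)) (p ^ e)) =
      ENNReal.ofReal ((V e ∩ Set.Ici 1).ncard / (p : ℝ) ^ (e * t)) := by
    rw [Breg, volume_biUnion_pi_Icc (hfin e) (isLowerSet_Vnu _ _) (pow_pos hp.pos e), pow_mul]
    push_cast
    rfl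
  have hlim : Tendsto (fun e => ((V e ∩ Set.Ici 1).ncard : ℝ) / (p : ℝ) ^ (e * t)) atTop
      (nhds L) :=
    tendsto_natCast_div_pow_of_le_of_le_add hp.one_lt
      (fun e => Set.ncard_le_ncard Set.inter_subset_left (hfin e))
      (fun e => (Set.ncard_inter_add_ncard_sdiff_eq_ncard _ _ (hfin e)).symm.le.trans
        (Nat.add_le_add_left (ncard_diff_Ici_one_le (hbound e)) _)) hL
  refine ⟨.iUnion fun e => .biUnion (Set.to_countable _) fun _ _ =>
    .univ_pi fun _ => measurableSet_Icc, ?_⟩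
  refine tendsto_nhds_unique (tendsto_measure_iUnion_atTop (hFP.monotone_Breg I J)) ?_
  simpa only [Function.comp_def, hvol] using ENNReal.tendsto_ofReal hlim
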